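/- For 1 ≤ p < 2, there exists a constant C such that for all t ≥ 1, t^p · ∫ |τ̂(t + z, 2)·t − 1|^p φ(z) dz ≤ C, where τ̂(x, 2) = (1/√2)(1 − Φ(x/√2))/φ(x/√2). -/

import Mathlib

open MeasureTheory ProbabilityTheory Filter

/-- Standard normal density `φ`. -/
noncomputable def stdPDF (x : ℝ) : ℝ :=
  (Real.sqrt (2 * Real.pi))⁻¹ * Real.exp (-(x ^ 2) / 2)

/-- Standard normal CDF `Φ`. -/
noncomputable def stdCDF (x : ℝ) : ℝ := ∫ t in Set.Iic x, stdPDF t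

/-- Mills-ratio estimator `τ̂(x, σ²) = (1/σ)(1 − Φ(x/σ))/φ(x/σ)`. -/
noncomputable def millsTau (σ x : ℝ) : ℝ :=
  (1 / σ) * (1 - stdCDF (x / σ)) / stdPDF (x / σ)

/-!
Write `x = t + z`. For `x > 0` the classical Mills-ratio bounds
`u φ(u) / (u² + 1) ≤ 1 - Φ(u) ≤ φ(u) / u` give `x / (x² + 2) ≤ τ̂(x, 2) ≤ 1 / x`, hence
`|τ̂ t - 1| · x ≤ 1 + |z|`; so on `{x ≥ 1}` the integrand `tᵖ |τ̂ t - 1|ᵖ` is bounded by a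
polynomial in `z`, integrable against `φ(z)`. On `{x ≤ 1}` only the crude bound
`τ̂(x, 2) ≤ √π e^{x²/4}` (from `1 - Φ ≤ 1`) is available, giving `tᵖ |τ̂ t - 1|ᵖ ≲ t⁴ e^{p x²/4}`.
Since `x ≤ 1 ≤ t`, the weight `φ(z) = φ(x - t)` absorbs `t⁴` and leaves `O(e^{-(2-p) x²/4})`,
integrable because `p < 2` and, by translation invariance, with an integral independent of `t`.
-/

open Real Set

lemma gaussianPDFReal_zero_one : gaussianPDFReal 0 1 = stdPDF := by
  ext x
  simp [gaussianPDFReal, stdPDF]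

lemma stdPDF_pos (x : ℝ) : 0 < stdPDF x := by
  unfold stdPDF
  positivity

lemma continuous_stdPDF : Continuous stdPDF := by
  unfold stdPDF
  fun_prop

lemma integral_stdPDF : ∫ x, stdPDF x = 1 := by
  rw [← gaussianPDFReal_zero_one, integral_gaussianPDFReal_eq_one 0 one_ne_zero]

lemma stdPDF_mul_exp (x y : ℝ) : stdPDF x * exp y = (√(2 * π))⁻¹ * exp (y - x ^ 2 / 2) := by
  rw [stdPDF, mul_assoc, ← exp_add]
  ring_nf

lemma integrable_pow_mul_stdPDF (n : ℕ) : Integrable fun x => x ^ n * stdPDF x := by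
  have h := (integrable_rpow_mul_exp_neg_mul_sq (b := 1 / 2) (by norm_num)
    (s := n) (by linarith [n.cast_nonneg (α := ℝ)])).const_mul (√(2 * π))⁻¹
  refine h.congr (ae_of_all _ fun x => ?_)
  simp only [rpow_natCast, stdPDF]
  ring_nf

lemma integrable_stdPDF : Integrable stdPDF := by
  simpa using integrable_pow_mul_stdPDF 0

lemma integrable_mul_stdPDF : Integrable fun x => x * stdPDF x := by
  simpa using integrable_pow_mul_stdPDF 1

lemma hasDerivAt_stdPDF (x : ℝ) : HasDerivAt stdPDF (-(x * stdPDF x)) x := by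
  have h := (((hasDerivAt_pow 2 x).fun_neg.div_const 2).exp).const_mul (√(2 * π))⁻¹
  exact h.congr_deriv (by simp only [stdPDF]; ring)

lemma tendsto_stdPDF_atTop : Tendsto stdPDF atTop (nhds 0) := by
  have h := (tendsto_exp_atBot.comp (tendsto_neg_atTop_atBot.comp
    ((tendsto_pow_atTop two_ne_zero).atTop_div_const two_pos))).const_mul (√(2 * π))⁻¹
  rw [mul_zero] at h
  convert h using 2 with x
  simp [stdPDF, neg_div]

lemma integral_Ioi_mul_stdPDF (u : ℝ) : ∫ s in Ioi u, s * stdPDF s = stdPDF u := by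
  have h := integral_Ioi_of_hasDerivAt_of_tendsto' (a := u) (f := fun s => -stdPDF s)
    (fun s _ => (hasDerivAt_stdPDF s).neg) (by simpa using integrable_mul_stdPDF.integrableOn)
    tendsto_stdPDF_atTop.neg
  simpa using h

lemma one_sub_stdCDF (u : ℝ) : 1 - stdCDF u = ∫ s in Ioi u, stdPDF s := by
  rw [← integral_stdPDF, ← intervalIntegral.integral_Iic_add_Ioi integrable_stdPDF.integrableOn
    integrable_stdPDF.integrableOn, stdCDF, add_sub_cancel_left]

lemma one_sub_stdCDF_nonneg (u : ℝ) : 0 ≤ 1 - stdCDF u := by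
  rw [one_sub_stdCDF]
  exact setIntegral_nonneg measurableSet_Ioi fun s _ => (stdPDF_pos s).le

lemma one_sub_stdCDF_le_one (u : ℝ) : 1 - stdCDF u ≤ 1 := by
  have : 0 ≤ stdCDF u := setIntegral_nonneg measurableSet_Iic fun s _ => (stdPDF_pos s).le
  linarith

lemma one_sub_stdCDF_le_div {u : ℝ} (hu : 0 < u) : 1 - stdCDF u ≤ stdPDF u / u := by
  rw [one_sub_stdCDF, ← integral_Ioi_mul_stdPDF, ← integral_div]
  refine setIntegral_mono_on integrable_stdPDF.integrableOn
    (integrable_mul_stdPDF.integrableOn.div_const u) measurableSet_Ioi fun s hs => ?_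
  rw [le_div_iff₀ hu, mul_comm]
  exact mul_le_mul_of_nonneg_right (le_of_lt hs) (stdPDF_pos s).le

lemma stdPDF_div_le {u : ℝ} (hu : 0 < u) : stdPDF u / u ≤ (1 + 1 / u ^ 2) * (1 - stdCDF u) := by
  have hderiv : ∀ s ∈ Ici u,
      HasDerivAt (fun s => -(stdPDF s / s)) (stdPDF s + stdPDF s / s ^ 2) s :=
    fun s hs => by
      have hs0 : s ≠ 0 := (hu.trans_le hs).ne'
      exact ((hasDerivAt_stdPDF s).div (hasDerivAt_id s) hs0).neg.congr_deriv
        (by simp only [id]; field_simp; ring)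
  have hle : ∀ s ∈ Ioi u, stdPDF s + stdPDF s / s ^ 2 ≤ (1 + 1 / u ^ 2) * stdPDF s := by
    intro s hs
    have : stdPDF s / s ^ 2 ≤ stdPDF s / u ^ 2 :=
      div_le_div_of_nonneg_left (stdPDF_pos s).le (by positivity) (by nlinarith [mem_Ioi.1 hs])
    linarith [show (1 + 1 / u ^ 2) * stdPDF s = stdPDF s + stdPDF s / u ^ 2 by ring]
  have hint : IntegrableOn (fun s => stdPDF s + stdPDF s / s ^ 2) (Ioi u) := by
    refine integrable_stdPDF.integrableOn.add (Integrable.mono'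
      (integrable_stdPDF.integrableOn.const_mul (1 / u ^ 2)) ?_ ?_)
    · exact (continuous_stdPDF.continuousOn.div (continuous_pow 2).continuousOn
        fun s hs => pow_ne_zero 2 (hu.trans hs).ne').aestronglyMeasurable measurableSet_Ioi
    · refine (ae_restrict_iff' measurableSet_Ioi).2 (ae_of_all _ fun s hs => ?_)
      rw [Real.norm_of_nonneg (div_nonneg (stdPDF_pos s).le (sq_nonneg s))]
      linarith [hle s hs]
  have hFTC := integral_Ioi_of_hasDerivAt_of_tendsto' hderiv hint
    (by simpa using (tendsto_stdPDF_atTop.div_atTop tendsto_id).neg)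
  rw [one_sub_stdCDF, ← integral_const_mul]
  calc stdPDF u / u = ∫ s in Ioi u, stdPDF s + stdPDF s / s ^ 2 := by simpa using hFTC.symm
    _ ≤ ∫ s in Ioi u, (1 + 1 / u ^ 2) * stdPDF s :=
      setIntegral_mono_on hint (integrable_stdPDF.integrableOn.const_mul _) measurableSet_Ioi hle

section MillsRatio

variable {σ x : ℝ}

lemma millsTau_nonneg (hσ : 0 ≤ σ) : 0 ≤ millsTau σ x := by
  have := one_sub_stdCDF_nonneg (x / σ)
  have := stdPDF_pos (x / σ)
  unfold millsTau
  positivity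

lemma millsTau_le_inv (hσ : 0 < σ) (hx : 0 < x) : millsTau σ x ≤ x⁻¹ := by
  have hu : 0 < x / σ := div_pos hx hσ
  have := stdPDF_pos (x / σ)
  calc millsTau σ x ≤ 1 / σ * (stdPDF (x / σ) / (x / σ)) / stdPDF (x / σ) := by
        unfold millsTau
        gcongr
        exact one_sub_stdCDF_le_div hu
    _ = x⁻¹ := by field_simp

lemma div_add_sq_le_millsTau (hσ : 0 < σ) (hx : 0 < x) :
    x / (x ^ 2 + σ ^ 2) ≤ millsTau σ x := by
  have hu : 0 < x / σ := div_pos hx hσ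
  have := stdPDF_pos (x / σ)
  calc x / (x ^ 2 + σ ^ 2)
      = 1 / σ * (stdPDF (x / σ) / (x / σ) / (1 + 1 / (x / σ) ^ 2)) / stdPDF (x / σ) := by
        field_simp
    _ ≤ millsTau σ x := by
        unfold millsTau
        gcongr
        rw [div_le_iff₀ (by positivity), mul_comm]
        exact stdPDF_div_le hu

lemma millsTau_le_exp (hσ : 0 < σ) :
    millsTau σ x ≤ √(2 * π) / σ * exp ((x / σ) ^ 2 / 2) := by
  have := stdPDF_pos (x / σ)
  calc millsTau σ x ≤ 1 / σ * 1 / stdPDF (x / σ) := by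
        unfold millsTau
        gcongr
        exact one_sub_stdCDF_le_one _
    _ = √(2 * π) / σ * exp ((x / σ) ^ 2 / 2) := by
        rw [stdPDF, neg_div, exp_neg]
        field_simp

end MillsRatio

lemma abs_millsTau_sqrt_two_mul_sub_one_mul_le {x t : ℝ} (hx : 0 < x) (ht : 0 ≤ t) :
    |millsTau √2 x * t - 1| * x ≤ 1 + |x - t| := by
  have hσ : (0 : ℝ) < √2 := by positivity
  have hupper : millsTau √2 x * x ≤ 1 := by
    have := mul_le_mul_of_nonneg_right (millsTau_le_inv hσ hx) hx.le
    rwa [inv_mul_cancel₀ hx.ne'] at this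
  have hlower : x ≤ millsTau √2 x * (x ^ 2 + 2) := by
    have := div_add_sq_le_millsTau hσ hx
    rwa [sq_sqrt zero_le_two, div_le_iff₀ (by positivity)] at this
  rw [← abs_of_pos hx, ← abs_mul, abs_of_pos hx, abs_le]
  constructor
  · nlinarith [mul_le_mul_of_nonneg_left hlower (mul_nonneg ht hx.le), le_abs_self (x - t),
      neg_abs_le (x - t), sq_nonneg (x - 1)]
  · nlinarith [mul_le_mul_of_nonneg_left hupper ht, neg_abs_le (x - t)]

section MomentBounds

variable {p t : ℝ}

lemma rpow_mul_abs_millsTau_sqrt_two_le_of_one_le (hp0 : 0 ≤ p) (hp2 : p ≤ 2) (ht : 0 ≤ t)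
    {z : ℝ} (hx : 1 ≤ t + z) :
    t ^ p * |millsTau √2 (t + z) * t - 1| ^ p ≤ 4 * (1 + z ^ 2) ^ 2 := by
  set E := |millsTau √2 (t + z) * t - 1|
  have hE : E * (t + z) ≤ 1 + |z| := by
    simpa using abs_millsTau_sqrt_two_mul_sub_one_mul_le (by linarith) ht (x := t + z)
  have htE : t * E ≤ 2 * (1 + z ^ 2) := by
    nlinarith [abs_nonneg (millsTau √2 (t + z) * t - 1), abs_nonneg z, sq_abs z, neg_abs_le z,
      le_abs_self z, sq_nonneg (|z| - 1)]
  calc t ^ p * E ^ p = (t * E) ^ p := (mul_rpow ht (abs_nonneg _)).symm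
    _ ≤ (2 * (1 + z ^ 2)) ^ p := rpow_le_rpow (by positivity) htE hp0
    _ ≤ (2 * (1 + z ^ 2)) ^ (2 : ℝ) := rpow_le_rpow_of_exponent_le (by nlinarith) hp2
    _ = 4 * (1 + z ^ 2) ^ 2 := by rw [rpow_two]; ring

lemma rpow_mul_abs_millsTau_sqrt_two_le (hp0 : 0 ≤ p) (hp2 : p ≤ 2) (ht : 1 ≤ t) (x : ℝ) :
    t ^ p * |millsTau √2 x * t - 1| ^ p ≤ 4 * π * t ^ 4 * exp (p * (x ^ 2 / 4)) := by
  have hτ : millsTau √2 x ≤ √π * exp (x ^ 2 / 4) := by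
    convert millsTau_le_exp (σ := √2) (x := x) (by positivity) using 2
    · rw [sqrt_mul zero_le_two, mul_div_cancel_left₀ _ (by positivity)]
    · rw [div_pow, sq_sqrt zero_le_two, div_div]; norm_num
  have hπ : 1 ≤ √π := one_le_sqrt.2 (by linarith [pi_gt_three])
  have hexp : 1 ≤ exp (x ^ 2 / 4) := one_le_exp (by positivity)
  have hB : 1 ≤ √π * t * exp (x ^ 2 / 4) := one_le_mul_of_one_le_of_one_le
    (one_le_mul_of_one_le_of_one_le hπ ht) hexp
  have htE : t * |millsTau √2 x * t - 1| ≤ 2 * √π * t ^ 2 * exp (x ^ 2 / 4) := by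
    have hE : |millsTau √2 x * t - 1| ≤ 2 * (√π * t * exp (x ^ 2 / 4)) := by
      rw [abs_le]
      constructor <;> nlinarith [millsTau_nonneg (x := x) (sqrt_nonneg 2)]
    nlinarith
  calc t ^ p * |millsTau √2 x * t - 1| ^ p = (t * |millsTau √2 x * t - 1|) ^ p :=
        (mul_rpow (by linarith) (abs_nonneg _)).symm
    _ ≤ (2 * √π * t ^ 2 * exp (x ^ 2 / 4)) ^ p := rpow_le_rpow (by positivity) htE hp0
    _ = (2 * √π * t ^ 2) ^ p * exp (p * (x ^ 2 / 4)) := by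
        rw [mul_rpow (by positivity) (exp_pos _).le, ← exp_mul, mul_comm (x ^ 2 / 4)]
    _ ≤ (2 * √π * t ^ 2) ^ (2 : ℝ) * exp (p * (x ^ 2 / 4)) := by
        gcongr
        nlinarith
    _ = 4 * π * t ^ 4 * exp (p * (x ^ 2 / 4)) := by
        rw [rpow_two, mul_pow, mul_pow, sq_sqrt pi_pos.le]; ring

lemma stdPDF_mul_pow_four_mul_exp_le (ht : 0 ≤ t) {z : ℝ} (hx : t + z ≤ 1) :
    stdPDF z * (t ^ 4 * exp (p * ((t + z) ^ 2 / 4)))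
      ≤ 24 * exp 2 * (√(2 * π))⁻¹ * exp (-((2 - p) / 4) * (t + z) ^ 2) := by
  have hpow : t ^ 4 ≤ 24 * exp t := by
    have := pow_div_factorial_le_exp t ht 4
    norm_num [Nat.factorial] at this
    linarith
  have hquad : t + (p * ((t + z) ^ 2 / 4) - z ^ 2 / 2) ≤ 2 + -((2 - p) / 4) * (t + z) ^ 2 := by
    nlinarith [mul_le_mul_of_nonneg_left hx ht, sq_nonneg (t - 2)]
  calc stdPDF z * (t ^ 4 * exp (p * ((t + z) ^ 2 / 4)))
      = t ^ 4 * ((√(2 * π))⁻¹ * exp (p * ((t + z) ^ 2 / 4) - z ^ 2 / 2)) := by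
        rw [← stdPDF_mul_exp]; ring
    _ ≤ 24 * exp t * ((√(2 * π))⁻¹ * exp (p * ((t + z) ^ 2 / 4) - z ^ 2 / 2)) := by gcongr
    _ = 24 * (√(2 * π))⁻¹ * exp (t + (p * ((t + z) ^ 2 / 4) - z ^ 2 / 2)) := by
        rw [exp_add]; ring
    _ ≤ 24 * (√(2 * π))⁻¹ * exp (2 + -((2 - p) / 4) * (t + z) ^ 2) := by gcongr
    _ = 24 * exp 2 * (√(2 * π))⁻¹ * exp (-((2 - p) / 4) * (t + z) ^ 2) := by
        rw [exp_add]; ring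

lemma exists_stdPDF_mul_rpow_mul_abs_millsTau_sqrt_two_le (hp0 : 0 ≤ p) (hp2 : p ≤ 2) :
    ∃ K, 0 ≤ K ∧ ∀ t, 1 ≤ t → ∀ z,
      stdPDF z * (t ^ p * |millsTau √2 (t + z) * t - 1| ^ p)
      ≤ stdPDF z * (4 * (1 + z ^ 2) ^ 2) + K * exp (-((2 - p) / 4) * (t + z) ^ 2) := by
  refine ⟨4 * π * (24 * exp 2 * (√(2 * π))⁻¹), by positivity, fun t ht z => ?_⟩
  have hφ := (stdPDF_pos z).le
  have hgauss := mul_nonneg (by positivity : 0 ≤ 4 * π * (24 * exp 2 * (√(2 * π))⁻¹))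
    (exp_pos (-((2 - p) / 4) * (t + z) ^ 2)).le
  rcases le_or_gt 1 (t + z) with hx | hx
  · have := rpow_mul_abs_millsTau_sqrt_two_le_of_one_le hp0 hp2 (by linarith) hx
    nlinarith
  · calc stdPDF z * (t ^ p * |millsTau √2 (t + z) * t - 1| ^ p)
        ≤ stdPDF z * (4 * π * t ^ 4 * exp (p * ((t + z) ^ 2 / 4))) :=
          mul_le_mul_of_nonneg_left (rpow_mul_abs_millsTau_sqrt_two_le hp0 hp2 ht _) hφ
      _ = 4 * π * (stdPDF z * (t ^ 4 * exp (p * ((t + z) ^ 2 / 4)))) := by ring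
      _ ≤ 4 * π * (24 * exp 2 * (√(2 * π))⁻¹ * exp (-((2 - p) / 4) * (t + z) ^ 2)) := by
          gcongr ?_ * ?_
          exact stdPDF_mul_pow_four_mul_exp_le (by linarith) hx.le
      _ ≤ _ := by
          have : 0 ≤ stdPDF z * (4 * (1 + z ^ 2) ^ 2) := by positivity
          linarith

end MomentBounds

lemma integrable_stdPDF_mul_four_mul_one_add_sq_sq :
    Integrable fun z => stdPDF z * (4 * (1 + z ^ 2) ^ 2) :=
  (((integrable_stdPDF.add ((integrable_pow_mul_stdPDF 2).const_mul 2)).add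
    (integrable_pow_mul_stdPDF 4)).const_mul 4).congr
      (ae_of_all _ fun z => by simp only [Pi.add_apply]; ring)

lemma lintegral_gaussianReal_zero_one (f : ℝ → ENNReal) :
    ∫⁻ z, f z ∂gaussianReal 0 1 = ∫⁻ z, ENNReal.ofReal (stdPDF z) * f z := by
  rw [gaussianReal_of_var_ne_zero 0 one_ne_zero,
    lintegral_withDensity_eq_lintegral_mul_non_measurable _ (measurable_gaussianPDF 0 1)
      (ae_of_all _ fun _ => gaussianPDF_lt_top)]
  simp [gaussianPDF, gaussianPDFReal_zero_one]

/-- For 1 ≤ p < 2, the scaled p-th moment tᵖ·∫ |τ̂(t+z,2)·t − 1|ᵖ φ(z) dz is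
bounded uniformly over t ≥ 1. -/
theorem stmt18 (p : ℝ) (hp1 : 1 ≤ p) (hp2 : p < 2) :
    ∃ C : ℝ, ∀ t : ℝ, 1 ≤ t →
      ENNReal.ofReal (t ^ p) *
        ∫⁻ z, ENNReal.ofReal (|millsTau (Real.sqrt 2) (t + z) * t - 1| ^ p)
          ∂(gaussianReal 0 1)
        ≤ ENNReal.ofReal C := by
  obtain ⟨K, hK, hbound⟩ :=
    exists_stdPDF_mul_rpow_mul_abs_millsTau_sqrt_two_le (p := p) (by linarith) hp2.le
  have hb : 0 < (2 - p) / 4 := by linarith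
  refine ⟨(∫ z, stdPDF z * (4 * (1 + z ^ 2) ^ 2)) + K * √(π / ((2 - p) / 4)), fun t ht => ?_⟩
  have hgauss : Integrable fun z => K * exp (-((2 - p) / 4) * (t + z) ^ 2) :=
    ((integrable_exp_neg_mul_sq hb).comp_add_left t).const_mul K
  rw [lintegral_gaussianReal_zero_one, ← lintegral_const_mul' _ _ ENNReal.ofReal_ne_top]
  calc ∫⁻ z, ENNReal.ofReal (t ^ p) * (ENNReal.ofReal (stdPDF z) *
        ENNReal.ofReal (|millsTau √2 (t + z) * t - 1| ^ p))
      = ∫⁻ z, ENNReal.ofReal (stdPDF z * (t ^ p * |millsTau √2 (t + z) * t - 1| ^ p)) := by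
        refine lintegral_congr fun z => ?_
        rw [ENNReal.ofReal_mul (stdPDF_pos z).le, ENNReal.ofReal_mul (by positivity)]
        ring
    _ ≤ ∫⁻ z, ENNReal.ofReal
          (stdPDF z * (4 * (1 + z ^ 2) ^ 2) + K * exp (-((2 - p) / 4) * (t + z) ^ 2)) :=
        lintegral_mono fun z => ENNReal.ofReal_le_ofReal (hbound t ht z)
    _ = ENNReal.ofReal
          (∫ z, stdPDF z * (4 * (1 + z ^ 2) ^ 2) + K * exp (-((2 - p) / 4) * (t + z) ^ 2)) :=
        (ofReal_integral_eq_lintegral_ofReal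
          (integrable_stdPDF_mul_four_mul_one_add_sq_sq.add hgauss) (ae_of_all _ fun z =>
          add_nonneg (mul_nonneg (stdPDF_pos z).le (by positivity)) (by positivity))).symm
    _ = _ := by
        rw [integral_add integrable_stdPDF_mul_four_mul_one_add_sq_sq hgauss, integral_const_mul,
          integral_add_left_eq_self (fun x => exp (-((2 - p) / 4) * x ^ 2)), integral_gaussian]
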